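/- arXiv:1411.3417 — 6 statements merged into one kernel-verified Lean document; each statement's English description precedes it below -/
import Mathlib

section
/- Fix a probability mass function p = (p_1, ..., p_m) with all p_i > 0, set σ(p) = sqrt(Σ p_i²) and p_max = max_i p_i. Let J_0, J_1, J_2, ... be i.i.d. [m]-valued random variables with law p, and let R = inf{k ≥ 1 : |{J_0, ..., J_k}| < k+1} be the first repeat time. Then for any t ∈ (0, 1/p_max), P(R ≥ t) ≤ 2·exp(−t²·σ²(p)/24). -/
/-!
On the event `R ≥ t` the first `2h` draws, `h = ⌊t/2⌋`, are pairwise distinct. Splitting them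
into two blocks `b`, `c` of length `h`, this forces `b` to be injective and `c` to avoid the `h`
values of `b`, which has probability `∑_b ∏ p(bᵢ) · (1 - ∑ p(bᵢ))^h ≤ (∑_v p_v e^{-h p_v})^h`.
Since `h p_v ≤ 1/2`, the bound `e^{-u} ≤ 1 - u/2` for `0 ≤ u ≤ 1/2` gives
`∑_v p_v e^{-h p_v} ≤ e^{-h σ²/2}`, so `P(R ≥ t) ≤ e^{-h² σ²/2} ≤ e^{-t² σ²/24}` once `t ≥ 6`.
For `t < 6` the right-hand side is at least `1`, because `t² σ² ≤ t`.
-/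

open MeasureTheory ProbabilityTheory Finset

section Probability

variable {α Ω : Type*} [MeasurableSpace α] [MeasurableSingletonClass α] [MeasurableSpace Ω]
  {P : Measure Ω} {J : ℕ → Ω → α}

lemma ProbabilityTheory.iIndepFun.measure_forall_eq_prod (hindep : iIndepFun J P) {n : ℕ}
    (a : Fin n → α) :
    P {ω | ∀ i : Fin n, J i ω = a i} = ∏ i : Fin n, P {ω | J i ω = a i} := by
  have := (hindep.precomp Fin.val_injective).measure_inter_preimage_eq_mul univ
    (sets := fun i => {a i}) fun i _ => measurableSet_singleton _
  simpa [Set.preimage, Set.iInter_ofPred] using this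

lemma measure_prefix_mem_eq_sum_prod (hmeas : ∀ n, Measurable (J n)) (hindep : iIndepFun J P)
    {p : α → ℝ} (hp : ∀ v, 0 ≤ p v) (hlaw : ∀ n v, P {ω | J n ω = v} = ENNReal.ofReal (p v))
    {n : ℕ} (T : Finset (Fin n → α)) :
    P {ω | (fun i : Fin n => J i ω) ∈ T} = ENNReal.ofReal (∑ a ∈ T, ∏ i, p (a i)) := by
  have hfiber (a : Fin n → α) :
      (fun ω (i : Fin n) => J i ω) ⁻¹' {a} = {ω | ∀ i : Fin n, J i ω = a i} := by
    ext ω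
    simp [funext_iff]
  rw [ENNReal.ofReal_sum_of_nonneg fun a _ => prod_nonneg fun i _ => hp _]
  change P ((fun ω (i : Fin n) => J i ω) ⁻¹' T) = _
  rw [← sum_measure_preimage_singleton T fun a _ =>
      (measurable_pi_lambda _ fun i : Fin n => hmeas i) (measurableSet_singleton a)]
  refine sum_congr rfl fun a _ => ?_
  rw [hfiber, hindep.measure_forall_eq_prod, ENNReal.ofReal_prod_of_nonneg fun i _ => hp _]
  exact prod_congr rfl fun i _ => hlaw i (a i)

end Probability

/-- A sequence without repeats gets the junk value `firstRepeat x = sInf ∅ = 0`. -/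
noncomputable def firstRepeat {β : Type*} (x : ℕ → β) : ℕ :=
  sInf {k | ∃ i j, i < j ∧ j ≤ k ∧ x i = x j}

lemma injective_of_le_firstRepeat {β : Type*} {x : ℕ → β} {n : ℕ} (hn : n ≤ firstRepeat x) :
    Function.Injective fun i : Fin n => x i := by
  have distinct {i j : Fin n} (hij : i < j) : x i ≠ x j := fun heq => by
    have : firstRepeat x ≤ j := Nat.sInf_le ⟨i, j, hij, le_rfl, heq⟩
    omega
  intro i j heq
  by_contra hne
  rcases lt_or_gt_of_ne hne with hij | hji
  exacts [distinct hij heq, distinct hji heq.symm]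

lemma Real.exp_neg_le_one_sub_half {u : ℝ} (h0 : 0 ≤ u) (h1 : u ≤ 1 / 2) :
    Real.exp (-u) ≤ 1 - u / 2 := by
  have hu : |-u| ≤ 1 := by rw [abs_neg, abs_of_nonneg h0]; linarith
  have := (abs_le.1 (Real.abs_exp_sub_one_sub_id_le hu)).2
  nlinarith

lemma sq_mul_sum_sq_le {ι : Type*} {s : Finset ι} {p : ι → ℝ} (hp : ∀ i, 0 ≤ p i)
    (hp1 : ∑ i ∈ s, p i = 1) {t : ℝ} (ht0 : 0 ≤ t) (ht : ∀ i, t * p i ≤ 1) :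
    t ^ 2 * ∑ i ∈ s, p i ^ 2 ≤ t :=
  calc t ^ 2 * ∑ i ∈ s, p i ^ 2 = ∑ i ∈ s, (t * p i) * (t * p i) := by
        rw [mul_sum]
        exact sum_congr rfl fun i _ => by ring
    _ ≤ ∑ i ∈ s, t * p i := sum_le_sum fun i _ =>
        mul_le_of_le_one_right (mul_nonneg ht0 (hp i)) (ht i)
    _ = t := by rw [← mul_sum, hp1, mul_one]

section Distinct

variable {α : Type*} [Fintype α] {p : α → ℝ}

lemma sum_mul_exp_neg_mul_le_exp (hp : ∀ v, 0 ≤ p v) (hp1 : ∑ v, p v = 1) {l : ℕ}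
    (hl : ∀ v, l * p v ≤ 1 / 2) :
    ∑ v, p v * Real.exp (-(l * p v)) ≤ Real.exp (-(l * ∑ v, p v ^ 2) / 2) :=
  calc ∑ v, p v * Real.exp (-(l * p v))
      ≤ ∑ v, p v * (1 - l * p v / 2) := sum_le_sum fun v _ =>
        mul_le_mul_of_nonneg_left
          (Real.exp_neg_le_one_sub_half (mul_nonneg l.cast_nonneg (hp v)) (hl v)) (hp v)
    _ = 1 - l * (∑ v, p v ^ 2) / 2 := by
        simp only [mul_sub, mul_one, sum_sub_distrib, hp1, mul_sum, sum_div]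
        exact congrArg _ (sum_congr rfl fun v _ => by ring)
    _ ≤ Real.exp (-(l * ∑ v, p v ^ 2) / 2) := by
        linarith [Real.add_one_le_exp (-(l * ∑ v, p v ^ 2) / 2)]

variable [DecidableEq α]

lemma sum_compl_image_eq_one_sub (hp1 : ∑ v, p v = 1) {k : ℕ} {b : Fin k → α}
    (hb : Function.Injective b) : ∑ v ∈ (univ.image b)ᶜ, p v = 1 - ∑ i, p (b i) := by
  rw [← hp1, ← sum_compl_add_sum (univ.image b), sum_image hb.injOn]
  ring

lemma sum_prod_injective_append_le (hp : ∀ v, 0 ≤ p v) (k l : ℕ) :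
    ∑ a : Fin (k + l) → α with Function.Injective a, ∏ i, p (a i)
      ≤ ∑ b : Fin k → α with Function.Injective b,
          (∏ i, p (b i)) * (∑ v ∈ (univ.image b)ᶜ, p v) ^ l :=
  calc ∑ a : Fin (k + l) → α with Function.Injective a, ∏ i, p (a i)
      = ∑ x : (Fin k → α) × (Fin l → α) with
          Function.Injective x.1 ∧ Function.Injective x.2 ∧ ∀ i j, x.1 i ≠ x.2 j,
          (∏ i, p (x.1 i)) * ∏ j, p (x.2 j) := by
        refine (sum_equiv (Fin.appendEquiv k l) (fun x => ?_) (fun x _ => ?_)).symm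
        · simp only [mem_filter, mem_univ, true_and]
          exact Fin.append_injective_iff.symm
        · simp [Fin.prod_univ_add]
    _ ≤ ∑ x : (Fin k → α) × (Fin l → α) with
          Function.Injective x.1 ∧ x.2 ∈ Fintype.piFinset fun _ => (univ.image x.1)ᶜ,
          (∏ i, p (x.1 i)) * ∏ j, p (x.2 j) := by
        refine sum_le_sum_of_subset_of_nonneg (fun x => ?_)
          fun x _ _ => mul_nonneg (prod_nonneg fun i _ => hp _) (prod_nonneg fun j _ => hp _)
        simp only [mem_filter, Fintype.mem_piFinset, mem_compl, mem_image, mem_univ, true_and,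
          not_exists]
        exact fun ⟨hinj, _, hdisj⟩ => ⟨hinj, fun j i => hdisj i j⟩
    _ = ∑ b : Fin k → α with Function.Injective b,
          (∏ i, p (b i)) * (∑ v ∈ (univ.image b)ᶜ, p v) ^ l := by
        rw [sum_finset_product _ (univ.filter Function.Injective)
          (fun b => Fintype.piFinset fun _ => (univ.image b)ᶜ) (by simp)]
        simp [← mul_sum, sum_pow']

lemma sum_prod_injective_le_pow (hp : ∀ v, 0 ≤ p v) (hp1 : ∑ v, p v = 1) (k l : ℕ) :
    ∑ a : Fin (k + l) → α with Function.Injective a, ∏ i, p (a i)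
      ≤ (∑ v, p v * Real.exp (-(l * p v))) ^ k := by
  have avoid_le {b : Fin k → α} (hb : Function.Injective b) :
      (∑ v ∈ (univ.image b)ᶜ, p v) ^ l ≤ ∏ i, Real.exp (-(l * p (b i))) := by
    have hnonneg : 0 ≤ 1 - ∑ i, p (b i) := by
      rw [← sum_compl_image_eq_one_sub hp1 hb]
      exact sum_nonneg fun v _ => hp v
    rw [sum_compl_image_eq_one_sub hp1 hb, ← Real.exp_sum, sum_neg_distrib, ← mul_sum,
      neg_mul_eq_mul_neg, Real.exp_nat_mul]
    exact pow_le_pow_left₀ hnonneg (Real.one_sub_le_exp_neg _) l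
  calc ∑ a : Fin (k + l) → α with Function.Injective a, ∏ i, p (a i)
      ≤ ∑ b : Fin k → α with Function.Injective b,
          (∏ i, p (b i)) * (∑ v ∈ (univ.image b)ᶜ, p v) ^ l :=
        sum_prod_injective_append_le hp k l
    _ ≤ ∑ b : Fin k → α with Function.Injective b, ∏ i, p (b i) * Real.exp (-(l * p (b i))) := by
        refine sum_le_sum fun b hb => ?_
        rw [prod_mul_distrib]
        exact mul_le_mul_of_nonneg_left (avoid_le (mem_filter.1 hb).2)
          (prod_nonneg fun i _ => hp _)
    _ ≤ ∑ b : Fin k → α, ∏ i, p (b i) * Real.exp (-(l * p (b i))) :=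
        sum_le_sum_of_subset_of_nonneg (filter_subset _ _)
          fun b _ _ => prod_nonneg fun i _ => mul_nonneg (hp _) (Real.exp_pos _).le
    _ = (∑ v, p v * Real.exp (-(l * p v))) ^ k := by
        rw [sum_pow', Fintype.piFinset_univ]

lemma sum_prod_injective_le_exp (hp : ∀ v, 0 ≤ p v) (hp1 : ∑ v, p v = 1) {h : ℕ}
    (hh : ∀ v, h * p v ≤ 1 / 2) :
    ∑ a : Fin (h + h) → α with Function.Injective a, ∏ i, p (a i)
      ≤ Real.exp (-(h ^ 2 * ∑ v, p v ^ 2) / 2) :=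
  calc ∑ a : Fin (h + h) → α with Function.Injective a, ∏ i, p (a i)
      ≤ (∑ v, p v * Real.exp (-(h * p v))) ^ h := sum_prod_injective_le_pow hp hp1 h h
    _ ≤ Real.exp (-(h * ∑ v, p v ^ 2) / 2) ^ h :=
        pow_le_pow_left₀ (sum_nonneg fun v _ => mul_nonneg (hp v) (Real.exp_pos _).le)
          (sum_mul_exp_neg_mul_le_exp hp hp1 hh) h
    _ = Real.exp (-(h ^ 2 * ∑ v, p v ^ 2) / 2) := by
        rw [← Real.exp_nat_mul]
        ring_nf

end Distinct

theorem first_repeat_time_tail_bound_general {m : ℕ}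
    (p : Fin m → ℝ) (hppos : ∀ i, 0 < p i) (hpsum : ∑ i, p i = 1)
    {Ω : Type} [MeasurableSpace Ω] (P : Measure Ω) [IsProbabilityMeasure P]
    (J : ℕ → Ω → Fin m) (hmeas : ∀ n, Measurable (J n))
    (hindep : iIndepFun J P)
    (hlaw : ∀ n i, P {ω | J n ω = i} = ENNReal.ofReal (p i))
    (R : Ω → ℕ)
    (hR : ∀ ω, R ω = sInf {k : ℕ | ∃ i j, i < j ∧ j ≤ k ∧ J i ω = J j ω})
    (t : ℝ) (ht0 : 0 < t) (htmax : ∀ i, t < 1 / p i) :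
    P {ω | t ≤ (R ω : ℝ)}
      ≤ ENNReal.ofReal (2 * Real.exp (-(t ^ 2 * ∑ i, (p i) ^ 2) / 24)) := by
  set σ2 := ∑ i, p i ^ 2
  have hp (i : Fin m) : 0 ≤ p i := (hppos i).le
  have htp (i : Fin m) : t * p i < 1 := (lt_div_iff₀ (hppos i)).1 (htmax i)
  have hσ2 : t ^ 2 * σ2 ≤ t := sq_mul_sum_sq_le hp hpsum ht0.le fun i => (htp i).le
  have hσ2_nonneg : 0 ≤ σ2 := sum_nonneg fun i _ => sq_nonneg _
  have hexp_pos := Real.exp_pos (-(t ^ 2 * σ2) / 24)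
  rcases lt_or_ge t 6 with ht6 | ht6
  · calc P {ω | t ≤ (R ω : ℝ)} ≤ ENNReal.ofReal 1 := by simpa using prob_le_one
      _ ≤ _ := ENNReal.ofReal_le_ofReal <| by
        linarith [Real.add_one_le_exp (-(t ^ 2 * σ2) / 24)]
  set h := ⌊t / 2⌋₊
  have hh_le : (h : ℝ) ≤ t / 2 := Nat.floor_le (by positivity)
  have hh_ge : t / 3 ≤ h := by linarith [Nat.lt_floor_add_one (t / 2)]
  have hprefix : {ω | t ≤ (R ω : ℝ)}
      ⊆ {ω | (fun i : Fin (h + h) => J i ω) ∈ univ.filter Function.Injective} := by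
    intro ω (hω : t ≤ R ω)
    have hle : ((h + h : ℕ) : ℝ) ≤ R ω := by push_cast; linarith
    rw [hR ω] at hle
    simpa using injective_of_le_firstRepeat (x := fun n => J n ω) (by exact_mod_cast hle)
  have hexp : Real.exp (-(h ^ 2 * σ2) / 2) ≤ Real.exp (-(t ^ 2 * σ2) / 24) := by
    have hsq : t ^ 2 / 9 ≤ (h : ℝ) ^ 2 := by nlinarith
    exact Real.exp_le_exp.2 (by nlinarith [mul_le_mul_of_nonneg_right hsq hσ2_nonneg])
  calc P {ω | t ≤ (R ω : ℝ)}
      ≤ P {ω | (fun i : Fin (h + h) => J i ω) ∈ univ.filter Function.Injective} :=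
        measure_mono hprefix
    _ = ENNReal.ofReal (∑ a : Fin (h + h) → Fin m with Function.Injective a, ∏ i, p (a i)) :=
        measure_prefix_mem_eq_sum_prod hmeas hindep hp hlaw _
    _ ≤ ENNReal.ofReal (2 * Real.exp (-(t ^ 2 * σ2) / 24)) := by
        refine ENNReal.ofReal_le_ofReal
          ((sum_prod_injective_le_exp hp hpsum fun v => ?_).trans (by linarith))
        nlinarith [htp v, hp v]

/-- Tail bound for the first repeat time of an i.i.d. sequence with law `p`:
for `t ∈ (0, 1/p_max)` (equivalently `t < 1/p i` for all `i`),
`P(R ≥ t) ≤ 2 exp(−t² σ²(p)/24)` where `σ²(p) = Σ p_i²`. -/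
theorem first_repeat_time_tail_bound {m : ℕ} (hm : 0 < m)
    (p : Fin m → ℝ) (hppos : ∀ i, 0 < p i) (hpsum : ∑ i, p i = 1)
    {Ω : Type} [MeasurableSpace Ω] (P : Measure Ω) [IsProbabilityMeasure P]
    (J : ℕ → Ω → Fin m) (hmeas : ∀ n, Measurable (J n))
    (hindep : iIndepFun J P)
    (hlaw : ∀ n i, P {ω | J n ω = i} = ENNReal.ofReal (p i))
    (R : Ω → ℕ)
    (hR : ∀ ω, R ω = sInf {k : ℕ | ∃ i j, i < j ∧ j ≤ k ∧ J i ω = J j ω})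
    (t : ℝ) (ht0 : 0 < t) (htmax : ∀ i, t < 1 / p i) :
    P {ω | t ≤ (R ω : ℝ)}
      ≤ ENNReal.ofReal (2 * Real.exp (-(t ^ 2 * ∑ i, (p i) ^ 2) / 24)) :=
  first_repeat_time_tail_bound_general p hppos hpsum P J hmeas hindep hlaw R hR t ht0 htmax
end

section
/- Fix μ > 0 and ν > 1, and set s₁(t) = μ·e^{−2t}. The function s₂(t) = μ·e^{−2t}·(−2ν + (ν−1)e^{2t}) / (−ν + (ν−1)e^{2t}) is the unique solution on [0, t_c) of the ODE s₂′(t) = (1/s₁(t))·[2s₂(t)² + 4s₁(t)² − 8s₂(t)s₁(t)] with initial condition s₂(0) = (ν+1)μ, where t_c = (1/2)·log(ν/(ν−1)). -/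
/-!
Existence is the quotient rule, the denominator `-ν + (ν - 1) e^{2t}` being negative on
`[0, t_c)`. For uniqueness, the equation is of Riccati type `y' = p y² + q y + r` with
`p = 2 / s₁`, `q = -8`, `r = 4 s₁`, so the difference `d = f - g` of two solutions satisfies the
linear equation `d' = (p (f + g) + q) d`. Its coefficient is bounded on every `[0, t] ⊆ [0, t_c)`,
and Grönwall's inequality forces `d = 0`.
-/

open Set Real

theorem eqOn_zero_of_hasDerivWithinAt_smul_self {E : Type*} [NormedAddCommGroup E]
    [NormedSpace ℝ E] {c : ℝ → ℝ} {d : ℝ → E} {a b : ℝ} (hc : ContinuousOn c (Ico a b))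
    (hd : ∀ x ∈ Ico a b, HasDerivWithinAt d (c x • d x) (Ico a b) x) (ha : d a = 0) :
    EqOn d 0 (Ico a b) := by
  intro t ht
  have hsub : Icc a t ⊆ Ico a b := Icc_subset_Ico_right ht.2
  obtain ⟨K, hK⟩ := isCompact_Icc.exists_bound_of_continuousOn (hc.mono hsub)
  refine eq_zero_of_abs_deriv_le_mul_abs_self_of_eq_zero_right (K := K)
    (f' := fun x => c x • d x) (fun x hx => (hd x (hsub hx)).continuousWithinAt.mono hsub)
    (fun x hx => ?_) ha (fun x hx => ?_) t ⟨ht.1, le_rfl⟩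
  · exact (hd x (hsub (Ico_subset_Icc_self hx))).mono_of_mem_nhdsWithin
      (Ico_mem_nhdsGE_of_mem (hsub (Ico_subset_Icc_self hx)))
  · rw [norm_smul]
    exact mul_le_mul_of_nonneg_right (hK x (Ico_subset_Icc_self hx)) (norm_nonneg _)

theorem eqOn_of_hasDerivWithinAt_riccati {p q r f g : ℝ → ℝ} {a b : ℝ}
    (hp : ContinuousOn p (Ico a b)) (hq : ContinuousOn q (Ico a b))
    (hf : ∀ x ∈ Ico a b, HasDerivWithinAt f (p x * f x ^ 2 + q x * f x + r x) (Ico a b) x)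
    (hg : ∀ x ∈ Ico a b, HasDerivWithinAt g (p x * g x ^ 2 + q x * g x + r x) (Ico a b) x)
    (ha : f a = g a) :
    EqOn f g (Ico a b) := by
  have hcont {h : ℝ → ℝ} {h' : ℝ → ℝ}
      (hh : ∀ x ∈ Ico a b, HasDerivWithinAt h (h' x) (Ico a b) x) : ContinuousOn h (Ico a b) :=
    fun x hx => (hh x hx).continuousWithinAt
  have hdiff := eqOn_zero_of_hasDerivWithinAt_smul_self (c := fun x => p x * (f x + g x) + q x)
    (d := f - g) ((hp.mul ((hcont hf).add (hcont hg))).add hq)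
    (fun x hx => ((hf x hx).sub (hg x hx)).congr_deriv
      (by simp only [Pi.sub_apply, smul_eq_mul]; ring))
    (sub_eq_zero.2 ha)
  exact fun x hx => sub_eq_zero.1 (hdiff hx)

theorem neg_add_sub_one_mul_exp_lt_zero {ν t : ℝ} (hν : 1 < ν)
    (ht : t < 1 / 2 * log (ν / (ν - 1))) : -ν + (ν - 1) * exp (2 * t) < 0 := by
  have hν₁ : 0 < ν - 1 := sub_pos.2 hν
  have h : exp (2 * t) < ν / (ν - 1) := by
    rw [← exp_log (div_pos (by linarith) hν₁)]
    exact exp_lt_exp.2 (by linarith)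
  rw [lt_div_iff₀ hν₁] at h
  linarith

theorem hasDerivAt_susceptibility_s2 {μ ν t : ℝ} {s1 s2 : ℝ → ℝ} (hμ : μ ≠ 0)
    (hs1 : ∀ t, s1 t = μ * exp (-2 * t))
    (hs2 : ∀ t, s2 t =
      μ * exp (-2 * t) * (-2 * ν + (ν - 1) * exp (2 * t)) / (-ν + (ν - 1) * exp (2 * t)))
    (hD : -ν + (ν - 1) * exp (2 * t) ≠ 0) :
    HasDerivAt s2 (1 / s1 t * (2 * s2 t ^ 2 + 4 * s1 t ^ 2 - 8 * s2 t * s1 t)) t := by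
  have hexp (c : ℝ) : HasDerivAt (fun t => exp (c * t)) (exp (c * t) * c) t := by
    simpa using ((hasDerivAt_id t).const_mul c).exp
  have hE := (hexp 2).const_mul (ν - 1)
  rw [funext hs2]
  refine (((hexp (-2)).const_mul μ).mul (hE.const_add (-2 * ν))).div (hE.const_add (-ν)) hD
    |>.congr_deriv ?_
  simp only [Pi.mul_apply, hs1]
  rw [show exp (-2 * t) = (exp (2 * t))⁻¹ by rw [← exp_neg]; ring_nf]
  generalize hDdef : -ν + (ν - 1) * exp (2 * t) = D at hD ⊢
  field_simp
  rw [← hDdef]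
  ring

/-- The explicit function `s₂` is the unique solution on `[0, t_c)` of the susceptibility ODE
`s₂′ = (1/s₁)(2s₂² + 4s₁² − 8 s₂ s₁)` with `s₂(0) = (ν+1)μ`, where `s₁(t) = μ e^{−2t}`
and `t_c = ½ log(ν/(ν−1))`. -/
theorem susceptibility_s2_unique_solution
    (μ ν : ℝ) (hμ : 0 < μ) (hν : 1 < ν)
    (tc : ℝ) (htc : tc = (1 / 2) * Real.log (ν / (ν - 1)))
    (s1 s2 : ℝ → ℝ)
    (hs1 : ∀ t, s1 t = μ * Real.exp (-2 * t))
    (hs2 : ∀ t, s2 t =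
      μ * Real.exp (-2 * t) * (-2 * ν + (ν - 1) * Real.exp (2 * t)) /
        (-ν + (ν - 1) * Real.exp (2 * t))) :
    (s2 0 = (ν + 1) * μ ∧
      ∀ t ∈ Ico (0 : ℝ) tc,
        HasDerivWithinAt s2
          ((1 / s1 t) * (2 * (s2 t) ^ 2 + 4 * (s1 t) ^ 2 - 8 * (s2 t) * (s1 t)))
          (Ico (0 : ℝ) tc) t) ∧
    ∀ f : ℝ → ℝ, f 0 = (ν + 1) * μ →
      (∀ t ∈ Ico (0 : ℝ) tc,
        HasDerivWithinAt f
          ((1 / s1 t) * (2 * (f t) ^ 2 + 4 * (s1 t) ^ 2 - 8 * (f t) * (s1 t)))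
          (Ico (0 : ℝ) tc) t) →
      ∀ t ∈ Ico (0 : ℝ) tc, f t = s2 t := by
  have hs1_ne (t : ℝ) : s1 t ≠ 0 := by rw [hs1]; positivity
  have hs2_init : s2 0 = (ν + 1) * μ := by
    rw [hs2]; simp only [mul_zero, exp_zero]; ring
  have hs2_deriv (t : ℝ) (ht : t ∈ Ico 0 tc) :=
    (hasDerivAt_susceptibility_s2 hμ.ne' hs1 hs2
      (neg_add_sub_one_mul_exp_lt_zero hν (htc ▸ ht.2)).ne).hasDerivWithinAt (s := Ico 0 tc)
  refine ⟨⟨hs2_init, hs2_deriv⟩, fun f hf_init hf_deriv => ?_⟩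
  have riccati_form (x t : ℝ) : 1 / s1 t * (2 * x ^ 2 + 4 * s1 t ^ 2 - 8 * x * s1 t) =
      2 / s1 t * x ^ 2 + -8 * x + 4 * s1 t := by
    field_simp [hs1_ne t]; ring
  have hs1_cont : Continuous s1 := by rw [funext hs1]; fun_prop
  have hp : ContinuousOn (fun t => 2 / s1 t) (Ico 0 tc) :=
    (continuous_const.div hs1_cont hs1_ne).continuousOn
  exact eqOn_of_hasDerivWithinAt_riccati (q := fun _ => -8) (r := fun t => 4 * s1 t) hp
    continuousOn_const (fun t ht => riccati_form (f t) t ▸ hf_deriv t ht)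
    (fun t ht => riccati_form (s2 t) t ▸ hs2_deriv t ht) (hf_init.trans hs2_init.symm)
end

section
/- Fix μ > 0, ν > 1 and t_c = (1/2)log(ν/(ν−1)). The function g(t) = μ / (ν − (ν−1)e^{2t}) is the unique solution on [0, t_c) of the ODE g′(t) = (1/s₁(t))·[2g(t)s₂(t) − 4g(t)s₁(t)] with g(0) = μ, where s₁(t) = μe^{−2t} and s₂(t) = μe^{−2t}(−2ν + (ν−1)e^{2t})/(−ν + (ν−1)e^{2t}). Moreover, g(t)/s₂(t) → 1/(ν−1) as t ↑ t_c. -/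
/-!
With `D(t) = ν − (ν−1)e^{2t}` one has `s₂/s₁ = 1 + ν/D`, so the ODE is the linear equation
`f′ = a f` with `a = 2(ν−1)e^{2t}/D = −D′/D`. Hence `(f D)′ = 0`: every solution with `f(0) = μ`
satisfies `f D = μ`, i.e. `f = μ/D`, and `D > 0` exactly on `[0, t_c)`. Finally
`g/s₂ = e^{2t}/(ν + D)`, which is continuous at `t_c` where `D` vanishes and `e^{2t_c} = ν/(ν−1)`.
-/

open Filter Set Real Topology

theorem Convex.mul_eq_of_hasDerivWithinAt_linear {s : Set ℝ} (hs : Convex ℝ s) {f D a : ℝ → ℝ}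
    (hf : ∀ t ∈ s, HasDerivWithinAt f (a t * f t) s t)
    (hD : ∀ t ∈ s, HasDerivWithinAt D (-(a t * D t)) s t) {x y : ℝ} (hx : x ∈ s) (hy : y ∈ s) :
    f y * D y = f x * D x := by
  have hzero : ∀ t ∈ s, HasDerivWithinAt (fun t => f t * D t) 0 s t := fun t ht =>
    ((hf t ht).mul (hD t ht)).congr_deriv (by ring)
  have := hs.norm_image_sub_le_of_norm_hasDerivWithin_le hzero (C := 0) (by simp) hx hy
  simpa [sub_eq_zero] using this

namespace MixedSusceptibility

variable {μ ν t : ℝ}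

noncomputable def criticalTime (ν : ℝ) : ℝ := 1 / 2 * log (ν / (ν - 1))

noncomputable def freeDensity (μ t : ℝ) : ℝ := μ * exp (-2 * t)

noncomputable def secondSusceptibility (μ ν t : ℝ) : ℝ :=
  μ * exp (-2 * t) * (-2 * ν + (ν - 1) * exp (2 * t)) / (-ν + (ν - 1) * exp (2 * t))

noncomputable def denom (ν t : ℝ) : ℝ := ν - (ν - 1) * exp (2 * t)

noncomputable def rate (ν t : ℝ) : ℝ := 2 * (ν - 1) * exp (2 * t) / denom ν t

lemma exp_two_mul_criticalTime (hν : 1 < ν) : exp (2 * criticalTime ν) = ν / (ν - 1) := by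
  rw [criticalTime, ← mul_assoc, mul_one_div_cancel two_ne_zero, one_mul]
  exact exp_log (div_pos (by linarith) (by linarith))

lemma denom_criticalTime (hν : 1 < ν) : denom ν (criticalTime ν) = 0 := by
  rw [denom, exp_two_mul_criticalTime hν, mul_div_cancel₀ _ (by linarith), sub_self]

lemma denom_zero : denom ν 0 = 1 := by simp [denom]

lemma denom_pos (hν : 1 < ν) (ht : t < criticalTime ν) : 0 < denom ν t := by
  have hexp : exp (2 * t) < ν / (ν - 1) := by
    rw [← exp_two_mul_criticalTime hν]
    exact exp_lt_exp.2 (by linarith)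
  rw [lt_div_iff₀ (by linarith)] at hexp
  rw [denom]
  linarith

lemma hasDerivAt_denom (ht : denom ν t ≠ 0) :
    HasDerivAt (denom ν) (-(rate ν t * denom ν t)) t := by
  have hexp : HasDerivAt (fun t => exp (2 * t)) (exp (2 * t) * 2) t := by
    simpa using ((hasDerivAt_id t).const_mul 2).exp
  refine ((hexp.const_mul (ν - 1)).const_sub ν).congr_deriv ?_
  rw [rate, div_mul_cancel₀ _ ht]
  ring

lemma hasDerivAt_div_denom (ht : denom ν t ≠ 0) :
    HasDerivAt (fun t => μ / denom ν t) (rate ν t * (μ / denom ν t)) t := by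
  refine ((hasDerivAt_const t μ).div (hasDerivAt_denom ht) ht).congr_deriv ?_
  field_simp
  ring

lemma secondSusceptibility_eq (μ ν t : ℝ) :
    secondSusceptibility μ ν t = μ * (exp (2 * t))⁻¹ * (ν + denom ν t) / denom ν t := by
  rw [secondSusceptibility, denom, show -2 * t = -(2 * t) by ring, exp_neg, ← neg_div_neg_eq]
  ring_nf

lemma ode_rhs_eq_rate_mul (hμ : μ ≠ 0) (ht : denom ν t ≠ 0) (y : ℝ) :
    1 / freeDensity μ t * (2 * y * secondSusceptibility μ ν t - 4 * y * freeDensity μ t)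
      = rate ν t * y := by
  rw [freeDensity, secondSusceptibility_eq, rate, show -2 * t = -(2 * t) by ring, exp_neg]
  field_simp
  rw [denom]
  ring

lemma div_denom_div_secondSusceptibility (hμ : μ ≠ 0) (hν : 1 < ν) (ht : 0 < denom ν t) :
    μ / denom ν t / secondSusceptibility μ ν t = exp (2 * t) / (ν + denom ν t) := by
  have hsum : ν + denom ν t ≠ 0 := by linarith
  rw [secondSusceptibility_eq]
  field_simp

lemma tendsto_div_denom_div_secondSusceptibility (hμ : μ ≠ 0) (hν : 1 < ν) :
    Tendsto (fun t => μ / denom ν t / secondSusceptibility μ ν t) (𝓝[<] criticalTime ν)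
      (𝓝 (1 / (ν - 1))) := by
  have hcont : ContinuousAt (fun t => exp (2 * t) / (ν + denom ν t)) (criticalTime ν) := by
    refine ContinuousAt.div (by fun_prop) (by unfold denom; fun_prop) ?_
    rw [denom_criticalTime hν]
    linarith
  have hlim : exp (2 * criticalTime ν) / (ν + denom ν (criticalTime ν)) = 1 / (ν - 1) := by
    rw [denom_criticalTime hν, exp_two_mul_criticalTime hν, add_zero]
    field_simp
  rw [← hlim]
  refine (hcont.tendsto.mono_left nhdsWithin_le_nhds).congr' ?_
  filter_upwards [self_mem_nhdsWithin] with t ht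
  exact (div_denom_div_secondSusceptibility hμ hν (denom_pos hν ht)).symm

end MixedSusceptibility

open MixedSusceptibility in
/-- The explicit function `g(t) = μ/(ν − (ν−1)e^{2t})` is the unique solution on `[0,t_c)` of
`g′ = (1/s₁)(2 g s₂ − 4 g s₁)` with `g(0) = μ`, and `g(t)/s₂(t) → 1/(ν−1)` as `t ↑ t_c`. -/
theorem mixed_susceptibility_g_unique_solution
    (μ ν : ℝ) (hμ : 0 < μ) (hν : 1 < ν)
    (tc : ℝ) (htc : tc = (1 / 2) * Real.log (ν / (ν - 1)))
    (s1 s2 g : ℝ → ℝ)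
    (hs1 : ∀ t, s1 t = μ * Real.exp (-2 * t))
    (hs2 : ∀ t, s2 t =
      μ * Real.exp (-2 * t) * (-2 * ν + (ν - 1) * Real.exp (2 * t)) /
        (-ν + (ν - 1) * Real.exp (2 * t)))
    (hg : ∀ t, g t = μ / (ν - (ν - 1) * Real.exp (2 * t))) :
    (g 0 = μ ∧
      ∀ t ∈ Ico (0 : ℝ) tc,
        HasDerivWithinAt g
          ((1 / s1 t) * (2 * g t * s2 t - 4 * g t * s1 t)) (Ico (0 : ℝ) tc) t) ∧
    (∀ f : ℝ → ℝ, f 0 = μ →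
      (∀ t ∈ Ico (0 : ℝ) tc,
        HasDerivWithinAt f
          ((1 / s1 t) * (2 * f t * s2 t - 4 * f t * s1 t)) (Ico (0 : ℝ) tc) t) →
      ∀ t ∈ Ico (0 : ℝ) tc, f t = g t) ∧
    Tendsto (fun t => g t / s2 t) (nhdsWithin tc (Iio tc)) (nhds (1 / (ν - 1))) := by
  obtain rfl : tc = criticalTime ν := htc
  obtain rfl : s1 = freeDensity μ := funext hs1
  obtain rfl : s2 = secondSusceptibility μ ν := funext hs2
  obtain rfl : g = fun t => μ / denom ν t := funext hg
  have hD : ∀ t ∈ Ico 0 (criticalTime ν), denom ν t ≠ 0 := fun t ht => (denom_pos hν ht.2).ne'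
  refine ⟨⟨by simp [denom_zero], fun t ht => ?_⟩, fun f hf0 hf t ht => ?_,
    tendsto_div_denom_div_secondSusceptibility hμ.ne' hν⟩
  · rw [ode_rhs_eq_rate_mul hμ.ne' (hD t ht)]
    exact (hasDerivAt_div_denom (hD t ht)).hasDerivWithinAt
  · have hfD := (convex_Ico 0 (criticalTime ν)).mul_eq_of_hasDerivWithinAt_linear
      (fun u hu => ode_rhs_eq_rate_mul hμ.ne' (hD u hu) (f u) ▸ hf u hu)
      (fun u hu => (hasDerivAt_denom (hD u hu)).hasDerivWithinAt)
      (left_mem_Ico.2 (ht.1.trans_lt ht.2)) ht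
    rw [hf0, denom_zero, mul_one] at hfD
    exact eq_div_of_mul_eq (hD t ht) hfD
end

section
/- Fix μ > 0, ν > 1 and t_c = (1/2)log(ν/(ν−1)). The function D(t) = ν²μ(1 − e^{−2t}) / (ν − (ν−1)e^{2t})² is the unique solution on [0, t_c) of the ODE D′(t) = (1/s₁(t))·[4D(t)s₂(t) + 2s₂(t)² − 8D(t)s₁(t) − 4s₂(t)s₁(t) + 2s₁(t)²] with D(0) = 0, where s₁(t) = μe^{−2t} and s₂(t) is as given. Moreover D(t)/s₂(t)² → ν/(μ(ν−1)²) as t ↑ t_c. -/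
open Filter Set Topology Real

/-!
The ODE is linear in `D`. With `P(t) = ν - (ν - 1) e^{2t}`, which is positive on `[0, t_c)` and
vanishes at `t_c`, one has `s₂ = s₁ (1 + ν / P)`, so the coefficient of `D` is
`a = (4 s₂ - 8 s₁) / s₁ = 4 (ν - P) / P`. Since `(P²)' = -a P²`, the square `P²` is an integrating
factor: the difference of two solutions times `P²` has zero derivative, so solutions with the same
initial value agree. That the explicit `D` is a solution is then a rational identity in `e^{-2t}`
and `P`. Finally `D / s₂² = ν² (1 - e^{-2t}) / (μ (e^{-2t} (P + ν))²)` for `t < t_c`, and the right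
side is continuous at `t_c`, where `e^{2t_c} = ν / (ν - 1)`.
-/

theorem Convex.eq_zero_of_hasDerivWithinAt_of_integratingFactor {I : Set ℝ} (hI : Convex ℝ I)
    {u m a : ℝ → ℝ} {t₀ t : ℝ}
    (hu : ∀ s ∈ I, HasDerivWithinAt u (a s * u s) I s)
    (hm : ∀ s ∈ I, HasDerivWithinAt m (-(a s * m s)) I s)
    (ht₀ : t₀ ∈ I) (hut₀ : u t₀ = 0) (ht : t ∈ I) (hmt : m t ≠ 0) : u t = 0 := by
  have hderiv : ∀ s ∈ I, HasDerivWithinAt (fun s => u s * m s) 0 I s := fun s hs =>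
    ((hu s hs).mul (hm s hs)).congr_deriv (by ring)
  have hconst := hI.norm_image_sub_le_of_norm_hasDerivWithin_le hderiv
    (fun _ _ => (norm_zero (E := ℝ)).le) ht₀ ht
  rw [zero_mul, norm_le_zero_iff, hut₀, zero_mul, sub_zero] at hconst
  exact (mul_eq_zero.1 hconst).resolve_right hmt

theorem hasDerivAt_exp_const_mul (c t : ℝ) :
    HasDerivAt (fun t => exp (c * t)) (c * exp (c * t)) t := by
  simpa [mul_comm] using ((hasDerivAt_id t).const_mul c).exp

namespace DistanceSusceptibility

variable {μ ν t : ℝ}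

noncomputable section

def criticalTime (ν : ℝ) : ℝ := (1 / 2) * log (ν / (ν - 1))

def denom (ν t : ℝ) : ℝ := ν - (ν - 1) * exp (2 * t)

def s₁ (μ t : ℝ) : ℝ := μ * exp (-2 * t)

def s₂ (μ ν t : ℝ) : ℝ :=
  μ * exp (-2 * t) * (-2 * ν + (ν - 1) * exp (2 * t)) / (-ν + (ν - 1) * exp (2 * t))

def D (μ ν t : ℝ) : ℝ := ν ^ 2 * μ * (1 - exp (-2 * t)) / denom ν t ^ 2

def odeRhs (a b d : ℝ) : ℝ :=
  (1 / a) * (4 * d * b + 2 * b ^ 2 - 8 * d * a - 4 * b * a + 2 * a ^ 2)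

end

theorem odeRhs_sub_odeRhs (a b d d' : ℝ) :
    odeRhs a b d - odeRhs a b d' = (4 * b - 8 * a) / a * (d - d') := by
  unfold odeRhs; ring

theorem exp_two_mul_criticalTime (hν : 1 < ν) : exp (2 * criticalTime ν) = ν / (ν - 1) := by
  rw [criticalTime, ← mul_assoc, mul_one_div_cancel two_ne_zero, one_mul,
    exp_log (div_pos (by linarith) (by linarith))]

theorem criticalTime_pos (hν : 1 < ν) : 0 < criticalTime ν :=
  mul_pos one_half_pos (log_pos ((one_lt_div (by linarith)).2 (by linarith)))

theorem denom_pos (hν : 1 < ν) (ht : t < criticalTime ν) : 0 < denom ν t := by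
  have h := exp_lt_exp.2 (mul_lt_mul_of_pos_left ht two_pos)
  rw [exp_two_mul_criticalTime hν, lt_div_iff₀ (by linarith)] at h
  unfold denom
  linarith

theorem hasDerivAt_denom (ν t : ℝ) :
    HasDerivAt (denom ν) (-(2 * (ν - 1) * exp (2 * t))) t :=
  ((hasDerivAt_exp_const_mul 2 t).const_mul (ν - 1)).const_sub ν |>.congr_deriv (by ring)

theorem hasDerivAt_denom_sq (ν t : ℝ) :
    HasDerivAt (fun t => denom ν t ^ 2) (-(4 * (ν - denom ν t) * denom ν t)) t :=
  (hasDerivAt_denom ν t).pow 2 |>.congr_deriv (by unfold denom; push_cast; ring)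

theorem s₂_eq_s₁_mul (ht : denom ν t ≠ 0) : s₂ μ ν t = s₁ μ t * (1 + ν / denom ν t) := by
  have hneg : -ν + (ν - 1) * exp (2 * t) = -denom ν t := by unfold denom; ring
  rw [s₂, hneg, s₁]
  field_simp
  unfold denom
  ring

theorem hasDerivAt_D (hμ : μ ≠ 0) (ht : denom ν t ≠ 0) :
    HasDerivAt (D μ ν) (odeRhs (s₁ μ t) (s₂ μ ν t) (D μ ν t)) t := by
  have hnum := ((hasDerivAt_exp_const_mul (-2) t).const_sub 1).const_mul (ν ^ 2 * μ)
  refine (hnum.div (hasDerivAt_denom_sq ν t) (pow_ne_zero 2 ht)).congr_deriv ?_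
  rw [s₂_eq_s₁_mul ht, odeRhs, D, s₁]
  have hy := exp_ne_zero (-2 * t)
  generalize exp (-2 * t) = y at *
  generalize denom ν t = P at *
  field_simp
  ring

theorem D_zero (μ ν : ℝ) : D μ ν 0 = 0 := by simp [D]

theorem eqOn_D_of_hasDerivWithinAt (hμ : μ ≠ 0) (hν : 1 < ν) {f : ℝ → ℝ} (hf₀ : f 0 = 0)
    (hf : ∀ t ∈ Ico 0 (criticalTime ν),
      HasDerivWithinAt f (odeRhs (s₁ μ t) (s₂ μ ν t) (f t)) (Ico 0 (criticalTime ν)) t) :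
    EqOn f (D μ ν) (Ico 0 (criticalTime ν)) := by
  intro t ht
  have hP : ∀ s ∈ Ico 0 (criticalTime ν), denom ν s ≠ 0 := fun s hs => (denom_pos hν hs.2).ne'
  rw [← sub_eq_zero]
  refine (convex_Ico _ _).eq_zero_of_hasDerivWithinAt_of_integratingFactor
    (u := fun s => f s - D μ ν s) (m := fun s => denom ν s ^ 2)
    (a := fun s => (4 * s₂ μ ν s - 8 * s₁ μ s) / s₁ μ s) ?_ ?_
    (left_mem_Ico.2 (criticalTime_pos hν)) (by rw [hf₀, D_zero, sub_zero]) ht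
    (pow_ne_zero 2 (hP t ht))
  · intro s hs
    exact ((hf s hs).sub (hasDerivAt_D hμ (hP s hs)).hasDerivWithinAt).congr_deriv
      (odeRhs_sub_odeRhs ..)
  · intro s hs
    refine (hasDerivAt_denom_sq ν s).hasDerivWithinAt.congr_deriv ?_
    rw [s₂_eq_s₁_mul (hP s hs), s₁]
    have hPs := hP s hs
    field_simp
    ring

theorem denom_criticalTime (hν : 1 < ν) : denom ν (criticalTime ν) = 0 := by
  rw [denom, exp_two_mul_criticalTime hν, mul_div_cancel₀ _ (by linarith), sub_self]

theorem exp_neg_two_mul_criticalTime (hν : 1 < ν) : exp (-2 * criticalTime ν) = (ν - 1) / ν := by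
  rw [neg_mul, exp_neg, exp_two_mul_criticalTime hν, inv_div]

theorem D_div_s₂_sq_eq (hμ : μ ≠ 0) (ht : denom ν t ≠ 0) :
    D μ ν t / s₂ μ ν t ^ 2 =
      ν ^ 2 * (1 - exp (-2 * t)) / (μ * (exp (-2 * t) * (denom ν t + ν)) ^ 2) := by
  rw [D, s₂_eq_s₁_mul ht, s₁]
  have hy := exp_ne_zero (-2 * t)
  generalize exp (-2 * t) = y at *
  generalize denom ν t = P at *
  field_simp

theorem tendsto_D_div_s₂_sq (hμ : μ ≠ 0) (hν : 1 < ν) :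
    Tendsto (fun t => D μ ν t / s₂ μ ν t ^ 2) (𝓝[<] criticalTime ν)
      (𝓝 (ν / (μ * (ν - 1) ^ 2))) := by
  have hν₀ : ν ≠ 0 := by linarith
  have hν₁ : ν - 1 ≠ 0 := by linarith
  have hcont : ContinuousAt
      (fun t => ν ^ 2 * (1 - exp (-2 * t)) / (μ * (exp (-2 * t) * (denom ν t + ν)) ^ 2))
      (criticalTime ν) := by
    refine ContinuousAt.div (by fun_prop) (by unfold denom; fun_prop) ?_
    rw [exp_neg_two_mul_criticalTime hν, denom_criticalTime hν]
    simp [hμ, hν₀, hν₁]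
  have hval : ν ^ 2 * (1 - exp (-2 * criticalTime ν)) /
      (μ * (exp (-2 * criticalTime ν) * (denom ν (criticalTime ν) + ν)) ^ 2) =
      ν / (μ * (ν - 1) ^ 2) := by
    rw [exp_neg_two_mul_criticalTime hν, denom_criticalTime hν]
    field_simp
    ring
  rw [← hval]
  refine hcont.continuousWithinAt.tendsto.congr' ?_
  filter_upwards [self_mem_nhdsWithin] with t ht
  exact (D_div_s₂_sq_eq hμ (denom_pos hν ht).ne').symm

end DistanceSusceptibility

/-- The explicit function `D(t) = ν²μ(1 − e^{−2t})/(ν − (ν−1)e^{2t})²` is the unique solution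
on `[0,t_c)` of the distance-susceptibility ODE
`D′ = (1/s₁)(4Ds₂ + 2s₂² − 8Ds₁ − 4s₂s₁ + 2s₁²)` with `D(0) = 0`, and
`D(t)/s₂(t)² → ν/(μ(ν−1)²)` as `t ↑ t_c`. -/
theorem distance_susceptibility_unique_solution
    (μ ν : ℝ) (hμ : 0 < μ) (hν : 1 < ν)
    (tc : ℝ) (htc : tc = (1 / 2) * Real.log (ν / (ν - 1)))
    (s1 s2 D : ℝ → ℝ)
    (hs1 : ∀ t, s1 t = μ * Real.exp (-2 * t))
    (hs2 : ∀ t, s2 t =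
      μ * Real.exp (-2 * t) * (-2 * ν + (ν - 1) * Real.exp (2 * t)) /
        (-ν + (ν - 1) * Real.exp (2 * t)))
    (hD : ∀ t, D t =
      ν ^ 2 * μ * (1 - Real.exp (-2 * t)) / (ν - (ν - 1) * Real.exp (2 * t)) ^ 2) :
    (D 0 = 0 ∧
      ∀ t ∈ Ico (0 : ℝ) tc,
        HasDerivWithinAt D
          ((1 / s1 t) * (4 * D t * s2 t + 2 * (s2 t) ^ 2 - 8 * D t * s1 t
            - 4 * s2 t * s1 t + 2 * (s1 t) ^ 2)) (Ico (0 : ℝ) tc) t) ∧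
    (∀ f : ℝ → ℝ, f 0 = 0 →
      (∀ t ∈ Ico (0 : ℝ) tc,
        HasDerivWithinAt f
          ((1 / s1 t) * (4 * f t * s2 t + 2 * (s2 t) ^ 2 - 8 * f t * s1 t
            - 4 * s2 t * s1 t + 2 * (s1 t) ^ 2)) (Ico (0 : ℝ) tc) t) →
      ∀ t ∈ Ico (0 : ℝ) tc, f t = D t) ∧
    Tendsto (fun t => D t / (s2 t) ^ 2) (nhdsWithin tc (Iio tc))
      (nhds (ν / (μ * (ν - 1) ^ 2))) := by
  obtain rfl : s1 = DistanceSusceptibility.s₁ μ := funext hs1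
  obtain rfl : s2 = DistanceSusceptibility.s₂ μ ν := funext hs2
  obtain rfl : D = DistanceSusceptibility.D μ ν := funext hD
  obtain rfl : tc = DistanceSusceptibility.criticalTime ν := htc
  open DistanceSusceptibility in
  exact ⟨⟨D_zero μ ν, fun t ht => (hasDerivAt_D hμ.ne' (denom_pos hν ht.2).ne').hasDerivWithinAt⟩,
    fun f hf₀ hf => eqOn_D_of_hasDerivWithinAt hμ.ne' hν hf₀ hf,
    tendsto_D_div_s₂_sq hμ.ne' hν⟩
end

section
/- Let D be a finite set with strictly positive weights (w_v)_{v∈D}, and let (w_{v(1)}, w_{v(2)}, ..., w_{v(|D|)}) be the weights listed in a size-biased random order (v(1) is chosen with probability proportional to its weight, and inductively v(k) is chosen among the remaining elements with probability proportional to weight). Then for every k ≥ 1, w_{v(k)} is stochastically dominated by w_{v(1)}; in particular E[w_{v(k)}] ≤ E[w_{v(1)}]. -/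
/-!
Swapping the entries in positions `i ≤ j` of an ordering `σ` with `w (σ i) ≤ w (σ j)` leaves the
product of the chosen weights unchanged and can only decrease each weight still remaining at a
step, so it can only increase the probability of the ordering. Pairing every ordering with its
swap then shows `E[φ (w (v j))] ≤ E[φ (w (v i))]` for every monotone `φ`; the indicators of
`(x, ∞)` give the stochastic domination and `φ = id` the comparison of expectations.
-/

open scoped Classical

/-- The probability that a size-biased random ordering of `Fin m` with weights `w` equals the
permutation `σ` (i.e. `v(k) = σ(k)` for all `k`). -/
noncomputable def sizeBiasedOrderProb {m : ℕ} (w : Fin m → ℝ) (σ : Equiv.Perm (Fin m)) : ℝ :=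
  ∏ k : Fin m, w (σ k) / ∑ j ∈ Finset.univ.filter (fun j => k ≤ j), w (σ j)

open Finset

theorem sum_mul_comp_le_sum_mul_of_involutive {α : Type*} [Fintype α] {e : α → α}
    (he : Function.Involutive e) (p f : α → ℝ)
    (hpf : ∀ x, 0 ≤ (p (e x) - p x) * (f (e x) - f x)) :
    ∑ x, p x * f (e x) ≤ ∑ x, p x * f x := by
  have hswap : ∑ x, p (e x) * f x = ∑ x, p x * f (e x) := by
    simpa only [Function.Involutive.coe_toPerm, he _] using
      Equiv.sum_comp (he.toPerm e) (fun x => p x * f (e x))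
  have hself : ∑ x, p (e x) * f (e x) = ∑ x, p x * f x :=
    Equiv.sum_comp (he.toPerm e) (fun x => p x * f x)
  have hsum := sum_nonneg fun x (_ : x ∈ univ) => hpf x
  simp only [sub_mul, mul_sub, sum_sub_distrib, hswap, hself] at hsum
  linarith

namespace SizeBiasedOrder

variable {m : ℕ} {w : Fin m → ℝ}

noncomputable def remainingWeight (w : Fin m → ℝ) (σ : Equiv.Perm (Fin m)) (k : Fin m) : ℝ :=
  ∑ j ∈ univ.filter (fun j => k ≤ j), w (σ j)

theorem sizeBiasedOrderProb_eq_div (σ : Equiv.Perm (Fin m)) :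
    sizeBiasedOrderProb w σ = (∏ k, w (σ k)) / ∏ k, remainingWeight w σ k :=
  prod_div_distrib _ _

theorem remainingWeight_pos (hw : ∀ i, 0 < w i) (σ : Equiv.Perm (Fin m)) (k : Fin m) :
    0 < remainingWeight w σ k :=
  sum_pos (fun j _ => hw _) ⟨k, by simp⟩

theorem remainingWeight_mul_swap_le {i j : Fin m} (hij : i ≤ j) (σ : Equiv.Perm (Fin m))
    (hσ : w (σ i) ≤ w (σ j)) (k : Fin m) :
    remainingWeight w (σ * Equiv.swap i j) k ≤ remainingWeight w σ k := by
  unfold remainingWeight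
  by_cases hki : k ≤ i
  · -- both swapped positions are still to come, so the swap only reorders the sum
    refine le_of_eq (Equiv.Perm.sum_comp (Equiv.swap i j) _ (fun t => w (σ t)) ?_)
    intro t ht
    rcases Equiv.eq_or_eq_of_swap_apply_ne_self ht with rfl | rfl <;> simp [hki, hki.trans hij]
  · -- position `i` is already chosen, and position `j` now holds the lighter `σ i`
    refine sum_le_sum fun t ht => ?_
    have hti : t ≠ i := by rintro rfl; exact hki (mem_filter.mp ht).2
    by_cases htj : t = j
    · subst htj; simpa using hσ
    · simp [Equiv.swap_apply_of_ne_of_ne hti htj]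

theorem sizeBiasedOrderProb_le_mul_swap (hw : ∀ i, 0 < w i) {i j : Fin m} (hij : i ≤ j)
    (σ : Equiv.Perm (Fin m)) (hσ : w (σ i) ≤ w (σ j)) :
    sizeBiasedOrderProb w σ ≤ sizeBiasedOrderProb w (σ * Equiv.swap i j) := by
  have hnum : ∏ k, w ((σ * Equiv.swap i j) k) = ∏ k, w (σ k) :=
    Equiv.prod_comp (Equiv.swap i j) (fun k => w (σ k))
  rw [sizeBiasedOrderProb_eq_div, sizeBiasedOrderProb_eq_div, hnum]
  exact div_le_div_of_nonneg_left (prod_nonneg fun k _ => (hw _).le)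
    (prod_pos fun k _ => remainingWeight_pos hw _ k)
    (prod_le_prod (fun k _ => (remainingWeight_pos hw _ k).le)
      fun k _ => remainingWeight_mul_swap_le hij σ hσ k)

theorem sum_sizeBiasedOrderProb_mul_comp_le (hw : ∀ i, 0 < w i) {i j : Fin m} (hij : i ≤ j)
    {φ : ℝ → ℝ} (hφ : Monotone φ) :
    ∑ σ, sizeBiasedOrderProb w σ * φ (w (σ j)) ≤ ∑ σ, sizeBiasedOrderProb w σ * φ (w (σ i)) := by
  have hinv : Function.Involutive fun σ : Equiv.Perm (Fin m) => σ * Equiv.swap i j :=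
    fun σ => by simp [mul_assoc]
  convert sum_mul_comp_le_sum_mul_of_involutive hinv (sizeBiasedOrderProb w)
    (fun σ => φ (w (σ i))) (fun σ => ?_) using 3 with σ
  · simp
  · simp only [Equiv.Perm.mul_apply, Equiv.swap_apply_left]
    rcases le_total (w (σ i)) (w (σ j)) with h | h
    · exact mul_nonneg (sub_nonneg.2 (sizeBiasedOrderProb_le_mul_swap hw hij σ h))
        (sub_nonneg.2 (hφ h))
    · have hback := sizeBiasedOrderProb_le_mul_swap hw hij (σ * Equiv.swap i j) (by simpa using h)
      rw [mul_assoc, Equiv.swap_mul_self, mul_one] at hback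
      exact mul_nonneg_of_nonpos_of_nonpos (sub_nonpos.2 hback) (sub_nonpos.2 (hφ h))

end SizeBiasedOrder

open SizeBiasedOrder in
/-- In a size-biased random ordering with strictly positive weights, the weight of the `k`-th
chosen element is stochastically dominated by the weight of the first chosen element; in
particular its expectation is no larger. -/
theorem size_biased_order_stochastic_domination {m : ℕ} (hm : 0 < m)
    (w : Fin m → ℝ) (hw : ∀ i, 0 < w i) (k : Fin m) :
    (∀ x : ℝ,
      ∑ σ ∈ Finset.univ.filter (fun σ : Equiv.Perm (Fin m) => x < w (σ k)),
          sizeBiasedOrderProb w σ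
        ≤ ∑ σ ∈ Finset.univ.filter (fun σ : Equiv.Perm (Fin m) => x < w (σ ⟨0, hm⟩)),
            sizeBiasedOrderProb w σ) ∧
    ∑ σ : Equiv.Perm (Fin m), sizeBiasedOrderProb w σ * w (σ k)
      ≤ ∑ σ : Equiv.Perm (Fin m), sizeBiasedOrderProb w σ * w (σ ⟨0, hm⟩) := by
  have hk : (⟨0, hm⟩ : Fin m) ≤ k := Nat.zero_le _
  refine ⟨fun x => ?_, sum_sizeBiasedOrderProb_mul_comp_le hw hk monotone_id⟩
  have hind : Monotone fun y : ℝ => if x < y then (1 : ℝ) else 0 := fun a b hab => by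
    by_cases ha : x < a
    · simp [ha, ha.trans_le hab]
    · simp only [ha, if_false]
      split_ifs <;> norm_num
  simpa only [sum_filter, mul_ite, mul_one, mul_zero] using
    sum_sizeBiasedOrderProb_mul_comp_le hw hk hind
end

section
/- Let G₀ ⊂ G₁ be two finite graphs on vertex sets V⁻ = [n]\{1} and V = [n] respectively, where G₁ is an inhomogeneous random graph (each pair i ≠ j connected independently with probability min(1, κ̄(x_i,x_j)/n), types x_i ∈ [K]) and G₀ is the induced subgraph on V⁻. Let D(G) = Σ_{i,j ∈ V(G)} d(i,j)·1{d(i,j)<∞} and S₂(G) = Σ_{components C} |C|². Set A = max_{x,y} κ̄(x,y). Then E[D(G₀)] ≤ E[D(G₁)] + (A²/(2n²))·E[D(G₀)·S₂(G₀)]. -/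
/-!
Deleting `v` can only lengthen a shortest path between two other vertices if that path runs
through `v`, and then `v` has two distinct neighbours joined in `G - v`. Calling this event bad,
`D(G - v) ≤ D(G) + D(G - v) 𝟙{bad}`, and a union bound over the ordered pairs `(i, j)` of distinct
vertices in a common component of `G - v` gives `2 · 𝟙{bad} ≤ Σ 𝟙{v ∼ i} 𝟙{v ∼ j}`. The edges at
`v` are independent of `G - v` and each is present with probability at most `A / n`, so every
term has expectation at most `(A / n)² E[D(G - v) 𝟙{i ↔ j}]`; summing over the pairs yields `S₂`.
-/

open MeasureTheory ProbabilityTheory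
open scoped ENNReal Classical

/-- `Σ_{i,j ∈ S} d(i,j) 𝟙{d(i,j) < ∞}` for a graph `G` (graph distances; pairs in distinct
components contribute `0`). -/
noncomputable def graphDistSum {n : ℕ} (G : SimpleGraph (Fin n)) (S : Finset (Fin n)) : ℝ :=
  ∑ i ∈ S, ∑ j ∈ S, if G.Reachable i j then (G.dist i j : ℝ) else 0

/-- `Σ_{components C} |C|² = Σ_{i,j ∈ S} 𝟙{i and j are connected}` for a graph `G`. -/
noncomputable def compSqSum {n : ℕ} (G : SimpleGraph (Fin n)) (S : Finset (Fin n)) : ℝ :=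
  ∑ i ∈ S, ∑ j ∈ S, if G.Reachable i j then (1 : ℝ) else 0

namespace SimpleGraph

variable {V : Type*} {G : SimpleGraph V} {u v w : V}

theorem Walk.exists_deleteIncidenceSet_walk_length_eq (p : G.Walk u w) (hv : v ∉ p.support) :
    ∃ q : (G.deleteIncidenceSet v).Walk u w, q.length = p.length :=
  ⟨p.toDeleteEdges _ fun _ he hinc => hv (p.mem_support_of_mem_edges he hinc.2),
    p.length_transfer _⟩

theorem Walk.IsPath.exists_adj_reachable_deleteIncidenceSet {p : G.Walk v u} (hp : p.IsPath)
    (hu : u ≠ v) : ∃ a ∈ p.support.tail, G.Adj v a ∧ (G.deleteIncidenceSet v).Reachable a u := by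
  cases p with
  | nil => exact absurd rfl hu
  | cons hadj q =>
    obtain ⟨-, hvq⟩ := cons_isPath_iff _ _ |>.1 hp
    obtain ⟨q', -⟩ := q.exists_deleteIncidenceSet_walk_length_eq hvq
    exact ⟨_, by simp, hadj, ⟨q'⟩⟩

theorem Walk.IsPath.exists_adj_adj_reachable_deleteIncidenceSet {p : G.Walk u w}
    (hp : p.IsPath) (hv : v ∈ p.support) (hu : u ≠ v) (hw : w ≠ v) :
    ∃ a b, a ≠ b ∧ G.Adj v a ∧ G.Adj v b ∧
      (G.deleteIncidenceSet v).Reachable u a ∧ (G.deleteIncidenceSet v).Reachable b w := by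
  obtain ⟨a, ha, hva, hau⟩ :=
    (hp.takeUntil hv).reverse.exists_adj_reachable_deleteIncidenceSet hu
  obtain ⟨b, hb, hvb, hbw⟩ := (hp.dropUntil hv).exists_adj_reachable_deleteIncidenceSet hw
  have hnodup := hp.support_nodup
  rw [← p.take_spec hv, support_append] at hnodup
  have ha' : a ∈ (p.takeUntil v hv).support := by
    simpa using List.mem_of_mem_tail ha
  exact ⟨a, b, fun hab => List.disjoint_of_nodup_append hnodup ha' (hab ▸ hb), hva, hvb,
    hau.symm, hbw⟩

theorem dist_deleteIncidenceSet_le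
    (h : ∀ a b, G.Adj v a → G.Adj v b → (G.deleteIncidenceSet v).Reachable a b → a = b)
    (hu : u ≠ v) (hw : w ≠ v) (hr : (G.deleteIncidenceSet v).Reachable u w) :
    (G.deleteIncidenceSet v).dist u w ≤ G.dist u w := by
  obtain ⟨p, hp, hlen⟩ := (hr.mono (G.deleteIncidenceSet_le v)).exists_path_of_dist
  by_cases hv : v ∈ p.support
  · obtain ⟨a, b, hab, hva, hvb, hua, hbw⟩ :=
      hp.exists_adj_adj_reachable_deleteIncidenceSet hv hu hw
    exact absurd (h a b hva hvb ((hua.symm.trans hr).trans hbw.symm)) hab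
  · obtain ⟨q, hq⟩ := p.exists_deleteIncidenceSet_walk_length_eq hv
    exact hlen ▸ hq ▸ dist_le q

end SimpleGraph

open Finset SimpleGraph

section GraphSums

variable {n : ℕ}

theorem graphDistSum_mono (G : SimpleGraph (Fin n)) {S T : Finset (Fin n)} (h : S ⊆ T) :
    graphDistSum G S ≤ graphDistSum G T := by
  simp only [graphDistSum, ← sum_product']
  exact sum_le_sum_of_subset_of_nonneg (product_subset_product h h) fun _ _ _ => by
    split <;> positivity

theorem graphDistSum_deleteIncidenceSet_le {G : SimpleGraph (Fin n)} {v : Fin n}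
    (h : ∀ a b, G.Adj v a → G.Adj v b → (G.deleteIncidenceSet v).Reachable a b → a = b) :
    graphDistSum (G.deleteIncidenceSet v) (univ.erase v) ≤ graphDistSum G univ := by
  refine le_trans (sum_le_sum fun i hi => sum_le_sum fun j hj => ?_)
    (graphDistSum_mono G (subset_univ _))
  by_cases hr : (G.deleteIncidenceSet v).Reachable i j
  · rw [if_pos hr, if_pos (hr.mono (G.deleteIncidenceSet_le v))]
    exact_mod_cast dist_deleteIncidenceSet_le h (ne_of_mem_erase hi) (ne_of_mem_erase hj) hr
  · rw [if_neg hr]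
    split <;> positivity

noncomputable def reachDistWeight (G : SimpleGraph (Fin n)) (S : Finset (Fin n)) (i j : Fin n) :
    ℝ≥0∞ :=
  if G.Reachable i j then ENNReal.ofReal (graphDistSum G S) else 0

noncomputable def badPairSum (G : SimpleGraph (Fin n)) (v : Fin n) : ℝ≥0∞ :=
  ∑ p ∈ (univ.erase v).offDiag, if G.Adj v p.1 ∧ G.Adj v p.2 then
    reachDistWeight (G.deleteIncidenceSet v) (univ.erase v) p.1 p.2 else 0

theorem ofReal_graphDistSum_deleteIncidenceSet_le (G : SimpleGraph (Fin n)) (v : Fin n) :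
    ENNReal.ofReal (graphDistSum (G.deleteIncidenceSet v) (univ.erase v)) ≤
      ENNReal.ofReal (graphDistSum G univ) + 2⁻¹ * badPairSum G v := by
  by_cases h : ∀ a b, G.Adj v a → G.Adj v b → (G.deleteIncidenceSet v).Reachable a b → a = b
  · exact (ENNReal.ofReal_le_ofReal (graphDistSum_deleteIncidenceSet_le h)).trans le_self_add
  push Not at h
  obtain ⟨a, b, ha, hb, hab, hne⟩ := h
  set d := ENNReal.ofReal (graphDistSum (G.deleteIncidenceSet v) (univ.erase v))
  have hpair : {(a, b), (b, a)} ⊆ (univ.erase v).offDiag := by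
    simp [insert_subset_iff, ha.ne', hb.ne', hne, hne.symm]
  have htwice : 2 * d ≤ badPairSum G v := by
    refine le_trans (le_of_eq ?_) (sum_le_sum_of_subset hpair)
    rw [sum_pair (by simp [hne])]
    simp [reachDistWeight, ha, hb, hab, hab.symm, d, two_mul]
  calc d = 2⁻¹ * (2 * d) := by
        rw [← mul_assoc, ENNReal.inv_mul_cancel two_ne_zero ENNReal.ofNat_ne_top, one_mul]
    _ ≤ 2⁻¹ * badPairSum G v := by gcongr
    _ ≤ _ := le_add_self

theorem sum_offDiag_reachDistWeight_le (G : SimpleGraph (Fin n)) (S : Finset (Fin n)) :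
    ∑ p ∈ S.offDiag, reachDistWeight G S p.1 p.2 ≤
      ENNReal.ofReal (graphDistSum G S * compSqSum G S) := by
  have hD : 0 ≤ graphDistSum G S :=
    sum_nonneg fun _ _ => sum_nonneg fun _ _ => by split <;> positivity
  calc ∑ p ∈ S.offDiag, reachDistWeight G S p.1 p.2
      ≤ ∑ p ∈ S ×ˢ S, reachDistWeight G S p.1 p.2 :=
        sum_le_sum_of_subset (product_sdiff_diag S ▸ sdiff_subset)
    _ = ∑ p ∈ S ×ˢ S,
          ENNReal.ofReal (graphDistSum G S * if G.Reachable p.1 p.2 then 1 else 0) := by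
        refine sum_congr rfl fun p _ => ?_
        unfold reachDistWeight
        split_ifs <;> simp
    _ = ENNReal.ofReal (graphDistSum G S * compSqSum G S) := by
        rw [← ENNReal.ofReal_sum_of_nonneg fun _ _ => by positivity, ← mul_sum, compSqSum,
          sum_product' S S fun i j => if G.Reachable i j then (1 : ℝ) else 0]

end GraphSums

section Independence

variable {ι Ω β : Type*} [MeasurableSpace Ω] {P : Measure Ω} [MeasurableSpace β] [Countable β]
  [MeasurableSingletonClass β] {X : ι → Ω → β}

theorem measurable_comp_of_finite {γ : Type*} [Finite ι] [MeasurableSpace γ]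
    (hX : ∀ i, Measurable (X i)) (Φ : (ι → β) → γ) : Measurable fun ω => Φ (X · ω) :=
  (measurable_of_countable Φ).comp (measurable_pi_lambda _ hX)

theorem ProbabilityTheory.iIndepFun.indepFun_comp_of_dependsOn {γ δ : Type*} [MeasurableSpace γ]
    [MeasurableSpace δ] [Nonempty γ] [Nonempty δ] (hX : ∀ i, Measurable (X i))
    (hind : iIndepFun X P) {S T : Finset ι} (hST : Disjoint S T) {F : (ι → β) → γ}
    {H : (ι → β) → δ} (hF : DependsOn F S) (hH : DependsOn H T) :
    IndepFun (fun ω => F (X · ω)) (fun ω => H (X · ω)) P := by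
  obtain ⟨F', rfl⟩ := dependsOn_iff_exists_comp.1 hF
  obtain ⟨H', rfl⟩ := dependsOn_iff_exists_comp.1 hH
  exact (hind.indepFun_finset S T hST hX).comp (measurable_of_countable F')
    (measurable_of_countable H')

end Independence

section RandomGraph

variable {Ω : Type*} [MeasurableSpace Ω] {P : Measure Ω}

theorem lintegral_ite_and_eq_mul {ι : Type*} [Finite ι] {X : ι → Ω → Bool}
    (hX : ∀ i, Measurable (X i)) (hind : iIndepFun X P) {S : Finset ι} {e₁ e₂ : ι}
    (he : e₁ ≠ e₂) (h₁ : e₁ ∉ S) (h₂ : e₂ ∉ S) {F : (ι → Bool) → ℝ≥0∞} (hF : DependsOn F S) :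
    ∫⁻ ω, (if X e₁ ω = true ∧ X e₂ ω = true then F (X · ω) else 0) ∂P =
      P {ω | X e₁ ω = true} * P {ω | X e₂ ω = true} * ∫⁻ ω, F (X · ω) ∂P := by
  set H : (ι → Bool) → ℝ≥0∞ := fun f => if f e₁ = true ∧ f e₂ = true then 1 else 0
  have hH : DependsOn H ({e₁, e₂} : Finset ι) := fun f g h => by
    simp [H, h e₁ (by simp), h e₂ (by simp)]
  have hindHF := hind.indepFun_comp_of_dependsOn hX (by simp [h₁, h₂]) hH hF
  have hHint : ∫⁻ ω, H (X · ω) ∂P = P {ω | X e₁ ω = true} * P {ω | X e₂ ω = true} := by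
    have hE (e : ι) : MeasurableSet {ω | X e ω = true} := hX e (measurableSet_singleton true)
    calc ∫⁻ ω, H (X · ω) ∂P
        = ∫⁻ ω, ({ω | X e₁ ω = true} ∩ {ω | X e₂ ω = true}).indicator 1 ω ∂P := by
          congr 1; ext ω; simp [H, Set.indicator_apply]
      _ = P ({ω | X e₁ ω = true} ∩ {ω | X e₂ ω = true}) :=
          lintegral_indicator_one ((hE e₁).inter (hE e₂))
      _ = _ := (hind.indepFun he).measure_inter_preimage_eq_mul _ _
          (measurableSet_singleton true) (measurableSet_singleton true)
  calc ∫⁻ ω, (if X e₁ ω = true ∧ X e₂ ω = true then F (X · ω) else 0) ∂P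
      = ∫⁻ ω, ((fun ω => H (X · ω)) * fun ω => F (X · ω)) ω ∂P := by
        congr 1; ext ω; simp only [H, Pi.mul_apply]; split_ifs <;> simp
    _ = _ := by
        rw [lintegral_mul_eq_lintegral_mul_lintegral_of_indepFun
          (measurable_comp_of_finite hX H) (measurable_comp_of_finite hX F) hindHF, hHint]

theorem lintegral_ite_adj_adj_deleteIncidenceSet {V : Type*} [Fintype V]
    {X : Sym2 V → Ω → Bool} (hX : ∀ e, Measurable (X e)) (hind : iIndepFun X P) {v i j : V}
    (hi : i ≠ v) (hj : j ≠ v) (hij : i ≠ j) (φ : SimpleGraph V → ℝ≥0∞) :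
    ∫⁻ ω, (if (fromEdgeSet {e | X e ω = true}).Adj v i ∧
        (fromEdgeSet {e | X e ω = true}).Adj v j then
          φ ((fromEdgeSet {e | X e ω = true}).deleteIncidenceSet v) else 0) ∂P =
      P {ω | X s(v, i) ω = true} * P {ω | X s(v, j) ω = true} *
        ∫⁻ ω, φ ((fromEdgeSet {e | X e ω = true}).deleteIncidenceSet v) ∂P := by
  have hdep : DependsOn
      (fun f : Sym2 V → Bool => φ ((fromEdgeSet {e | f e = true}).deleteIncidenceSet v))
      (univ.filter (v ∉ ·) : Finset (Sym2 V)) := fun f g h => by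
    dsimp only
    congr 1
    ext a b
    simp only [deleteIncidenceSet_adj, fromEdgeSet_adj, Set.mem_ofPred_eq]
    exact and_congr_left fun ⟨ha, hb⟩ => by rw [h s(a, b) (by simp [ha.symm, hb.symm])]
  simp only [fromEdgeSet_adj, Set.mem_ofPred_eq, ne_eq, hi.symm, hj.symm, not_false_eq_true,
    and_true]
  exact lintegral_ite_and_eq_mul hX hind (by simp [hij, hi]) (by simp) (by simp) hdep

theorem lintegral_badPairSum_le {n : ℕ} {X : Sym2 (Fin n) → Ω → Bool}
    (hX : ∀ e, Measurable (X e)) (hind : iIndepFun X P) (v : Fin n) {c : ℝ≥0∞}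
    (hc : ∀ i, i ≠ v → P {ω | X s(v, i) ω = true} ≤ c) :
    ∫⁻ ω, badPairSum (fromEdgeSet {e | X e ω = true}) v ∂P ≤
      c ^ 2 * ∫⁻ ω, ENNReal.ofReal
        (graphDistSum ((fromEdgeSet {e | X e ω = true}).deleteIncidenceSet v) (univ.erase v) *
          compSqSum ((fromEdgeSet {e | X e ω = true}).deleteIncidenceSet v) (univ.erase v)) ∂P := by
  have hmeas (ψ : SimpleGraph (Fin n) → ℝ≥0∞) :
      Measurable fun ω => ψ (fromEdgeSet {e | X e ω = true}) :=
    measurable_comp_of_finite hX fun f => ψ (fromEdgeSet {e | f e = true})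
  unfold badPairSum
  rw [lintegral_finsetSum _ fun p _ => hmeas fun G => if G.Adj v p.1 ∧ G.Adj v p.2 then
    reachDistWeight (G.deleteIncidenceSet v) (univ.erase v) p.1 p.2 else 0]
  calc _ = ∑ p ∈ (univ.erase v).offDiag, P {ω | X s(v, p.1) ω = true} *
        P {ω | X s(v, p.2) ω = true} * ∫⁻ ω, reachDistWeight
          ((fromEdgeSet {e | X e ω = true}).deleteIncidenceSet v) (univ.erase v) p.1 p.2 ∂P :=
        sum_congr rfl fun p hp => by
          obtain ⟨h₁, h₂, h₁₂⟩ := mem_offDiag.1 hp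
          convert lintegral_ite_adj_adj_deleteIncidenceSet hX hind (ne_of_mem_erase h₁)
            (ne_of_mem_erase h₂) h₁₂ fun H => reachDistWeight H (univ.erase v) p.1 p.2
    _ ≤ ∑ p ∈ (univ.erase v).offDiag, c ^ 2 * ∫⁻ ω, reachDistWeight
          ((fromEdgeSet {e | X e ω = true}).deleteIncidenceSet v) (univ.erase v) p.1 p.2 ∂P := by
        refine sum_le_sum fun p hp => ?_
        obtain ⟨h₁, h₂, -⟩ := mem_offDiag.1 hp
        rw [sq]
        gcongr
        exacts [hc _ (ne_of_mem_erase h₁), hc _ (ne_of_mem_erase h₂)]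
    _ = c ^ 2 * ∫⁻ ω, ∑ p ∈ (univ.erase v).offDiag, reachDistWeight
          ((fromEdgeSet {e | X e ω = true}).deleteIncidenceSet v) (univ.erase v) p.1 p.2 ∂P := by
        rw [← mul_sum, lintegral_finsetSum _ fun p _ => hmeas fun G =>
          reachDistWeight (G.deleteIncidenceSet v) (univ.erase v) p.1 p.2]
    _ ≤ _ := by
        gcongr
        exact sum_offDiag_reachDistWeight_le _ _

end RandomGraph

theorem inv_two_mul_ofReal_div_sq_le (a b : ℝ) :
    2⁻¹ * ENNReal.ofReal (a / b) ^ 2 ≤ ENNReal.ofReal (a ^ 2 / (2 * b ^ 2)) := by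
  calc 2⁻¹ * ENNReal.ofReal (a / b) ^ 2 ≤ ENNReal.ofReal 2⁻¹ * ENNReal.ofReal ((a / b) ^ 2) := by
        rw [ENNReal.ofReal_inv_of_pos two_pos, ENNReal.ofReal_ofNat]
        rcases le_total 0 (a / b) with h | h
        · rw [ENNReal.ofReal_pow h]
        · simp [ENNReal.ofReal_of_nonpos h]
    _ = ENNReal.ofReal (a ^ 2 / (2 * b ^ 2)) := by
        rw [← ENNReal.ofReal_mul (by norm_num)]
        ring_nf

theorem irg_expected_distance_monotonicity_general {n K : ℕ}
    (κ : Fin K → Fin K → ℝ)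
    (x : Fin n → Fin K) (A : ℝ) (hA : A = ⨆ a, ⨆ b, κ a b)
    {Ω : Type} [MeasurableSpace Ω] (P : Measure Ω)
    (X : Sym2 (Fin n) → Ω → Bool) (hmeas : ∀ e, Measurable (X e))
    (hindep : iIndepFun X P)
    (hlaw : ∀ i j : Fin n, i ≠ j →
      P {ω | X s(i, j) ω = true} = ENNReal.ofReal (min 1 (κ (x i) (x j) / n)))
    (G₁ G₀ : Ω → SimpleGraph (Fin n)) (v₀ : Fin n)
    (hG₁ : ∀ ω i j, (G₁ ω).Adj i j ↔ (i ≠ j ∧ X s(i, j) ω = true))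
    (hG₀ : ∀ ω i j, (G₀ ω).Adj i j ↔ ((G₁ ω).Adj i j ∧ i ≠ v₀ ∧ j ≠ v₀)) :
    ∫⁻ ω, ENNReal.ofReal (graphDistSum (G₀ ω) (Finset.univ.erase v₀)) ∂P
      ≤ ∫⁻ ω, ENNReal.ofReal (graphDistSum (G₁ ω) Finset.univ) ∂P
        + ENNReal.ofReal (A ^ 2 / (2 * (n : ℝ) ^ 2)) *
            ∫⁻ ω, ENNReal.ofReal
              (graphDistSum (G₀ ω) (Finset.univ.erase v₀) *
                compSqSum (G₀ ω) (Finset.univ.erase v₀)) ∂P := by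
  obtain rfl : G₀ = fun ω => (G₁ ω).deleteIncidenceSet v₀ :=
    funext fun ω => by ext i j; rw [hG₀, deleteIncidenceSet_adj]
  obtain rfl : G₁ = fun ω => fromEdgeSet {e | X e ω = true} :=
    funext fun ω => by ext i j; rw [hG₁, fromEdgeSet_adj, Set.mem_ofPred_eq, and_comm]
  have hκA (a b) : κ a b ≤ A := hA ▸ (le_ciSup (Set.finite_range _).bddAbove b).trans
    (le_ciSup (f := fun a => ⨆ b, κ a b) (Set.finite_range _).bddAbove a)
  have hedge (i) (hi : i ≠ v₀) : P {ω | X s(v₀, i) ω = true} ≤ ENNReal.ofReal (A / n) := by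
    rw [hlaw v₀ i hi.symm]
    exact ENNReal.ofReal_le_ofReal
      ((min_le_right _ _).trans (div_le_div_of_nonneg_right (hκA _ _) n.cast_nonneg))
  calc _ ≤ ∫⁻ ω, ENNReal.ofReal (graphDistSum (fromEdgeSet {e | X e ω = true}) univ)
          + 2⁻¹ * badPairSum (fromEdgeSet {e | X e ω = true}) v₀ ∂P :=
        lintegral_mono fun ω => ofReal_graphDistSum_deleteIncidenceSet_le _ v₀
    _ = ∫⁻ ω, ENNReal.ofReal (graphDistSum (fromEdgeSet {e | X e ω = true}) univ) ∂P
          + 2⁻¹ * ∫⁻ ω, badPairSum (fromEdgeSet {e | X e ω = true}) v₀ ∂P := by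
        rw [lintegral_add_left (measurable_comp_of_finite hmeas fun f =>
          ENNReal.ofReal (graphDistSum (fromEdgeSet {e | f e = true}) univ)),
          lintegral_const_mul' _ _ (by simp)]
    _ ≤ _ := by
        grw [lintegral_badPairSum_le hmeas hindep v₀ hedge, ← mul_assoc,
          inv_two_mul_ofReal_div_sq_le]

/-- Monotonicity of expected distances for the inhomogeneous random graph: removing vertex
`v₀` from the IRG `G₁` on `[n]` to obtain the induced graph `G₀` on `[n] \ {v₀}` satisfies
`E[D(G₀)] ≤ E[D(G₁)] + (A²/(2n²)) E[D(G₀) S₂(G₀)]`, where `A = max κ̄`. -/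
theorem irg_expected_distance_monotonicity {n K : ℕ} (hn : 2 ≤ n) (hK : 0 < K)
    (κ : Fin K → Fin K → ℝ) (hκ : ∀ a b, 0 ≤ κ a b) (hκsymm : ∀ a b, κ a b = κ b a)
    (x : Fin n → Fin K) (A : ℝ) (hA : A = ⨆ a, ⨆ b, κ a b)
    {Ω : Type} [MeasurableSpace Ω] (P : Measure Ω) [IsProbabilityMeasure P]
    (X : Sym2 (Fin n) → Ω → Bool) (hmeas : ∀ e, Measurable (X e))
    (hindep : iIndepFun X P)
    (hlaw : ∀ i j : Fin n, i ≠ j →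
      P {ω | X s(i, j) ω = true} = ENNReal.ofReal (min 1 (κ (x i) (x j) / n)))
    (G₁ G₀ : Ω → SimpleGraph (Fin n)) (v₀ : Fin n)
    (hG₁ : ∀ ω i j, (G₁ ω).Adj i j ↔ (i ≠ j ∧ X s(i, j) ω = true))
    (hG₀ : ∀ ω i j, (G₀ ω).Adj i j ↔ ((G₁ ω).Adj i j ∧ i ≠ v₀ ∧ j ≠ v₀)) :
    ∫⁻ ω, ENNReal.ofReal (graphDistSum (G₀ ω) (Finset.univ.erase v₀)) ∂P
      ≤ ∫⁻ ω, ENNReal.ofReal (graphDistSum (G₁ ω) Finset.univ) ∂P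
        + ENNReal.ofReal (A ^ 2 / (2 * (n : ℝ) ^ 2)) *
            ∫⁻ ω, ENNReal.ofReal
              (graphDistSum (G₀ ω) (Finset.univ.erase v₀) *
                compSqSum (G₀ ω) (Finset.univ.erase v₀)) ∂P :=
  irg_expected_distance_monotonicity_general κ x A hA P X hmeas hindep hlaw G₁ G₀ v₀ hG₁ hG₀
end
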